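/- arXiv:1310.3368 — 3 statements merged into one kernel-verified Lean document; each statement's English description precedes it below -/
import Mathlib

section
/- Let n ≥ 1 be an integer and γ > 1. For every measurable function f : ℝⁿ → ℝ such that f ∈ L¹(ℝⁿ, dx) ∩ L^γ(ℝⁿ, dx) and ∫_{ℝⁿ} |f(x)| |x|² dx < ∞, one has ∫_{ℝⁿ} |f(x)| dx ≤ C₁ · (∫_{ℝⁿ} |f(x)|^γ dx)^{(1/γ)·(2γ/((n+2)γ−n))} · (∫_{ℝⁿ} |f(x)| |x|² dx)^{n(γ−1)/((n+2)γ−n)}, where C₁ = 2 (π^{n/2}/Γ(n/2+1))^{2(γ−1)/((n+2)γ−n)}. -/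
/-! Split `∫ |f|` at the ball `B_R`. By Hölder, the part inside is at most
`|B_R| ^ (1 - 1/γ) ‖f‖_γ`, a multiple of `R ^ (n (γ - 1) / γ)` since `|B_R| = ω_n R ^ n`; the part
outside is at most `R⁻² ∫ |f| |x|²` because `1 ≤ |x|² / R²` there. Choosing `R` so that the two
terms are equal gives the bound, the factor `2` counting the two terms. -/

open MeasureTheory Real Metric Filter Topology Module

theorem setIntegral_abs_le_measureReal_rpow_mul_integral_rpow {α : Type*} [MeasurableSpace α]
    {μ : Measure α} {f : α → ℝ} {p : ℝ} (hp : 1 < p)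
    (hf : AEStronglyMeasurable f μ) (hfp : Integrable (fun x => |f x| ^ p) μ) {s : Set α}
    (hs : μ s ≠ ⊤) :
    ∫ x in s, |f x| ∂μ ≤ μ.real s ^ ((p - 1) / p) * (∫ x, |f x| ^ p ∂μ) ^ (1 / p) := by
  have hp0 : 0 < p := zero_lt_one.trans hp
  have hmem : MemLp f (ENNReal.ofReal p) μ := by
    have hp0' : ENNReal.ofReal p ≠ 0 := by simpa using hp0
    rw [← memLp_norm_rpow_iff hf hp0' ENNReal.ofReal_ne_top, ENNReal.div_self hp0'
      ENNReal.ofReal_ne_top, memLp_one_iff_integrable]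
    simpa [ENNReal.toReal_ofReal hp0.le] using hfp
  have : IsFiniteMeasure (μ.restrict s) := isFiniteMeasure_restrict.mpr hs
  have holder := integral_mul_le_Lp_mul_Lq_of_nonneg (μ := μ.restrict s)
    (Real.HolderConjugate.conjExponent hp) (.of_forall fun x => abs_nonneg (f x))
    (.of_forall fun _ => zero_le_one) (hmem.abs.restrict s) (memLp_const 1)
  simp only [mul_one, one_rpow, setIntegral_const, smul_eq_mul, Real.conjExponent,
    one_div_div] at holder
  calc ∫ x in s, |f x| ∂μ ≤ (∫ x in s, |f x| ^ p ∂μ) ^ (1 / p) * μ.real s ^ ((p - 1) / p) := holder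
    _ ≤ (∫ x, |f x| ^ p ∂μ) ^ (1 / p) * μ.real s ^ ((p - 1) / p) := by
      refine mul_le_mul_of_nonneg_right (rpow_le_rpow ?_ ?_ (by positivity)) (by positivity)
      · exact setIntegral_nonneg_of_ae (.of_forall fun x => by positivity)
      · exact setIntegral_le_integral hfp (.of_forall fun x => by positivity)
    _ = _ := mul_comm _ _

theorem setIntegral_compl_ball_abs_le {E : Type*} [NormedAddCommGroup E] [MeasurableSpace E]
    [OpensMeasurableSpace E] {μ : Measure E} {f : E → ℝ} {k : ℕ}
    (hfk : Integrable (fun x => |f x| * ‖x‖ ^ k) μ) {R : ℝ} (hR : 0 < R) :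
    ∫ x in (ball 0 R)ᶜ, |f x| ∂μ ≤ (∫ x, |f x| * ‖x‖ ^ k ∂μ) / R ^ k := by
  calc ∫ x in (ball 0 R)ᶜ, |f x| ∂μ ≤ ∫ x in (ball 0 R)ᶜ, |f x| * ‖x‖ ^ k / R ^ k ∂μ := by
        refine integral_mono_of_nonneg (.of_forall fun x => abs_nonneg _)
          (hfk.div_const _).integrableOn (ae_restrict_of_forall_mem measurableSet_ball.compl ?_)
        intro x hx
        have hRx : R ^ k ≤ ‖x‖ ^ k := by
          gcongr
          simpa using hx
        dsimp only
        rw [mul_div_assoc]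
        exact le_mul_of_one_le_right (abs_nonneg _) ((one_le_div (by positivity)).mpr hRx)
    _ ≤ ∫ x, |f x| * ‖x‖ ^ k / R ^ k ∂μ :=
        setIntegral_le_integral (hfk.div_const _) (.of_forall fun x => by positivity)
    _ = (∫ x, |f x| * ‖x‖ ^ k ∂μ) / R ^ k := integral_div _ _

theorem le_two_mul_rpow_mul_rpow_of_forall_le_add {x a m θ k : ℝ} (ha : 0 ≤ a) (hm : 0 ≤ m)
    (hθ : 0 < θ) (hk : 0 < k) (h : ∀ R, 0 < R → x ≤ a * R ^ θ + m / R ^ k) :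
    x ≤ 2 * a ^ (k / (θ + k)) * m ^ (θ / (θ + k)) := by
  have hs : 0 < θ + k := add_pos hθ hk
  rcases ha.eq_or_lt with rfl | ha
  · rw [zero_rpow (div_pos hk hs).ne', mul_zero, zero_mul]
    have hlim : Tendsto (fun R => m / R ^ k) atTop (𝓝 0) :=
      tendsto_const_nhds.div_atTop (tendsto_rpow_atTop hk)
    exact ge_of_tendsto hlim ((eventually_gt_atTop 0).mono fun R hR => by simpa using h R hR)
  rcases hm.eq_or_lt with rfl | hm
  · rw [zero_rpow (div_pos hθ hs).ne', mul_zero]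
    have hlim : Tendsto (fun R => a * R ^ θ) (𝓝[>] 0) (𝓝 0) := by
      simpa [zero_rpow hθ.ne'] using
        ((continuousAt_rpow_const 0 θ (.inr hθ.le)).tendsto.const_mul a).mono_left
          nhdsWithin_le_nhds
    exact ge_of_tendsto hlim (eventually_mem_nhdsWithin.mono fun R hR => by simpa using h R hR)
  set R := (m / a) ^ (1 / (θ + k))
  have hR : 0 < R := rpow_pos_of_pos (div_pos hm ha) _
  have hsplit : ∀ b : ℝ, 0 < b → b = b ^ (k / (θ + k)) * b ^ (θ / (θ + k)) := fun b hb => by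
    rw [← rpow_add hb, ← add_div, add_comm, div_self hs.ne', rpow_one]
  have hRpow : ∀ e : ℝ, R ^ e = m ^ (e / (θ + k)) / a ^ (e / (θ + k)) := fun e => by
    rw [← rpow_mul (div_pos hm ha).le, div_rpow hm.le ha.le, one_div_mul_eq_div]
  have hRθ : a * R ^ θ = a ^ (k / (θ + k)) * m ^ (θ / (θ + k)) := by
    rw [hRpow]
    nth_rw 1 [hsplit a ha]
    field_simp
  have hRk : m / R ^ k = a ^ (k / (θ + k)) * m ^ (θ / (θ + k)) := by
    rw [hRpow]
    nth_rw 1 [hsplit m hm]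
    field_simp
  linarith [h R hR]

section InnerProductSpace

variable {E : Type*} [NormedAddCommGroup E] [InnerProductSpace ℝ E] [FiniteDimensional ℝ E]
  [MeasurableSpace E] [BorelSpace E] [Nontrivial E]

theorem InnerProductSpace.volume_real_ball (x : E) {r : ℝ} (hr : 0 ≤ r) :
    volume.real (ball x r) =
      π ^ ((finrank ℝ E : ℝ) / 2) / Gamma ((finrank ℝ E : ℝ) / 2 + 1) * r ^ finrank ℝ E := by
  rw [measureReal_def, volume_ball, ENNReal.toReal_mul, ENNReal.toReal_pow,
    ENNReal.toReal_ofReal hr, ENNReal.toReal_ofReal (by positivity),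
    rpow_div_two_eq_sqrt _ pi_pos.le, rpow_natCast, mul_comm]

theorem integral_abs_le_split_at_radius {f : E → ℝ} {γ : ℝ} (hγ : 1 < γ) (hf : Integrable f)
    (hfγ : Integrable (fun x => |f x| ^ γ)) (hfx : Integrable (fun x => |f x| * ‖x‖ ^ 2))
    {R : ℝ} (hR : 0 < R) :
    ∫ x, |f x| ≤
      (π ^ ((finrank ℝ E : ℝ) / 2) / Gamma ((finrank ℝ E : ℝ) / 2 + 1)) ^ ((γ - 1) / γ)
          * (∫ x, |f x| ^ γ) ^ (1 / γ) * R ^ ((finrank ℝ E : ℝ) * (γ - 1) / γ)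
        + (∫ x, |f x| * ‖x‖ ^ 2) / R ^ (2 : ℝ) := by
  have hball := setIntegral_abs_le_measureReal_rpow_mul_integral_rpow hγ hf.aestronglyMeasurable
    hfγ (measure_ball_lt_top (x := (0 : E)) (r := R)).ne
  rw [InnerProductSpace.volume_real_ball _ hR.le, mul_rpow (by positivity) (by positivity),
    ← rpow_natCast, ← rpow_mul hR.le] at hball
  rw [← integral_add_compl measurableSet_ball hf.abs, rpow_two]
  calc _ ≤ _ := add_le_add hball (setIntegral_compl_ball_abs_le hfx hR)
    _ = _ := by rw [mul_div_assoc]; ring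

end InnerProductSpace

/-- **Lemma 3.4 (Chemin interpolation inequality).**
For `n ≥ 1`, `γ > 1` and `f ∈ L¹ ∩ L^γ` with finite second moment,
`‖f‖_{L¹} ≤ C₁ ‖f‖_{L^γ}^{2γ/((n+2)γ−n)} ‖f‖_{L¹(|x|² dx)}^{n(γ−1)/((n+2)γ−n)}`
where `C₁ = 2 (π^{n/2}/Γ(n/2+1))^{2(γ−1)/((n+2)γ−n)}`. -/
theorem chemin_interpolation_inequality
    (n : ℕ) (hn : 1 ≤ n) (γ : ℝ) (hγ : 1 < γ)
    (f : EuclideanSpace ℝ (Fin n) → ℝ)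
    (hf1 : Integrable f)
    (hfγ : Integrable (fun x => |f x| ^ γ))
    (hfx : Integrable (fun x => |f x| * ‖x‖ ^ 2)) :
    ∫ x, |f x| ≤
      (2 * (Real.pi ^ ((n : ℝ) / 2) / Real.Gamma ((n : ℝ) / 2 + 1)) ^
          (2 * (γ - 1) / (((n : ℝ) + 2) * γ - n)))
        * (∫ x, |f x| ^ γ) ^ ((1 / γ) * (2 * γ / (((n : ℝ) + 2) * γ - n)))
        * (∫ x, |f x| * ‖x‖ ^ 2) ^ ((n : ℝ) * (γ - 1) / (((n : ℝ) + 2) * γ - n)) := by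
  have : Nonempty (Fin n) := ⟨⟨0, hn⟩⟩
  have hγ0 : 0 < γ := zero_lt_one.trans hγ
  have hn0 : (0 : ℝ) < n := by exact_mod_cast hn
  set ω := π ^ ((n : ℝ) / 2) / Gamma ((n : ℝ) / 2 + 1)
  set I := ∫ x, |f x| ^ γ
  set M := ∫ x, |f x| * ‖x‖ ^ 2
  set D := ((n : ℝ) + 2) * γ - n with hD_def
  have hω : 0 ≤ ω := by positivity
  have hI : 0 ≤ I := integral_nonneg fun x => by positivity
  have hM : 0 ≤ M := integral_nonneg fun x => by positivity
  have hθ : 0 < (n : ℝ) * (γ - 1) / γ := by have := sub_pos.mpr hγ; positivity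
  have hD : 0 < D := by nlinarith
  have key := le_two_mul_rpow_mul_rpow_of_forall_le_add (k := 2)
    (a := ω ^ ((γ - 1) / γ) * I ^ (1 / γ)) (by positivity) hM hθ two_pos fun R hR => by
      simpa only [finrank_euclideanSpace_fin] using
        integral_abs_le_split_at_radius hγ hf1 hfγ hfx hR
  have hs : (n : ℝ) * (γ - 1) / γ + 2 = D / γ := by rw [hD_def]; field_simp; ring
  have eω : (γ - 1) / γ * (2 / (D / γ)) = 2 * (γ - 1) / D := by field_simp
  have eI : 1 / γ * (2 / (D / γ)) = 1 / γ * (2 * γ / D) := by field_simp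
  have eM : (n : ℝ) * (γ - 1) / γ / (D / γ) = n * (γ - 1) / D := by field_simp
  rwa [mul_rpow (by positivity) (by positivity), ← rpow_mul hω, ← rpow_mul hI, ← mul_assoc, hs, eω,
    eI, eM] at key
end

section
/- Let c ≥ 0, B ≥ 0 and p > 1, and let y : [0,∞) → ℝ be differentiable with y′(t) ≤ (c/(t+1) + B (t+1)^{−p}) y(t) and y(t) ≥ 0 for all t ≥ 0. Then y(t) ≤ y(0) exp(B/(p−1)) (t+1)^c exp(−B/((p−1)(t+1)^{p−1})) for all t ≥ 0. -/
open Real Set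

/-- The integrating factor `exp (-φ)` turns `y' ≤ φ' y` into `(y exp (-φ))' ≤ 0`. -/
theorem antitoneOn_mul_exp_neg_of_hasDerivAt_le {y y' φ a : ℝ → ℝ} {t₀ : ℝ}
    (hy : ∀ t, t₀ ≤ t → HasDerivAt y (y' t) t) (hφ : ∀ t, t₀ ≤ t → HasDerivAt φ (a t) t)
    (hineq : ∀ t, t₀ ≤ t → y' t ≤ a t * y t) :
    AntitoneOn (fun t => y t * exp (-φ t)) (Ici t₀) := by
  have hderiv : ∀ t, t₀ ≤ t →
      HasDerivAt (fun t => y t * exp (-φ t)) ((y' t - a t * y t) * exp (-φ t)) t := by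
    intro t ht
    exact ((hy t ht).mul (hφ t ht).neg.exp).congr_deriv (by simp only [Pi.neg_apply]; ring)
  refine antitoneOn_of_deriv_nonpos (convex_Ici t₀)
    (fun t ht => (hderiv t ht).continuousAt.continuousWithinAt) ?_ ?_
  · intro t ht
    rw [interior_Ici] at ht
    exact (hderiv t (le_of_lt ht)).differentiableAt.differentiableWithinAt
  · intro t ht
    rw [interior_Ici] at ht
    rw [(hderiv t (le_of_lt ht)).deriv]
    exact mul_nonpos_of_nonpos_of_nonneg (sub_nonpos.mpr (hineq t (le_of_lt ht))) (exp_nonneg _)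

theorem le_mul_exp_sub_of_hasDerivAt_le {y y' φ a : ℝ → ℝ} {t₀ : ℝ}
    (hy : ∀ t, t₀ ≤ t → HasDerivAt y (y' t) t) (hφ : ∀ t, t₀ ≤ t → HasDerivAt φ (a t) t)
    (hineq : ∀ t, t₀ ≤ t → y' t ≤ a t * y t) {t : ℝ} (ht : t₀ ≤ t) :
    y t ≤ y t₀ * exp (φ t - φ t₀) := by
  have hanti := antitoneOn_mul_exp_neg_of_hasDerivAt_le hy hφ hineq self_mem_Ici ht ht
  calc y t = y t * exp (-φ t) * exp (φ t) := by rw [mul_assoc, ← exp_add]; simp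
    _ ≤ y t₀ * exp (-φ t₀) * exp (φ t) := mul_le_mul_of_nonneg_right hanti (exp_nonneg _)
    _ = y t₀ * exp (φ t - φ t₀) := by rw [mul_assoc, ← exp_add, neg_add_eq_sub]

noncomputable def powerGronwallExponent (c B p t : ℝ) : ℝ :=
  c * log (t + 1) - B / (p - 1) * (t + 1) ^ (1 - p)

theorem hasDerivAt_powerGronwallExponent (c B : ℝ) {p t : ℝ} (hp : p ≠ 1) (ht : -1 < t) :
    HasDerivAt (powerGronwallExponent c B p) (c / (t + 1) + B * (t + 1) ^ (-p)) t := by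
  have ht1 : t + 1 ≠ 0 := by linarith
  have hshift : HasDerivAt (fun s : ℝ => s + 1) 1 t := (hasDerivAt_id t).add_const 1
  have hlog := (hasDerivAt_log ht1).comp t hshift
  have hrpow := (hasDerivAt_rpow_const (p := 1 - p) (Or.inl ht1)).comp t hshift
  refine ((hlog.const_mul c).sub (hrpow.const_mul (B / (p - 1)))).congr_deriv ?_
  rw [show 1 - p - 1 = -p by ring]
  field_simp [sub_ne_zero.mpr hp]
  ring

theorem exp_powerGronwallExponent_sub_zero (c B p : ℝ) {t : ℝ} (ht : -1 < t) :
    exp (powerGronwallExponent c B p t - powerGronwallExponent c B p 0) =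
      exp (B / (p - 1)) * (t + 1) ^ c * exp (-B / ((p - 1) * (t + 1) ^ (p - 1))) := by
  have ht1 : 0 < t + 1 := by linarith
  have hinv : (t + 1) ^ (1 - p) = ((t + 1) ^ (p - 1))⁻¹ := by
    rw [show 1 - p = -(p - 1) by ring, rpow_neg ht1.le]
  rw [rpow_def_of_pos ht1, ← exp_add, ← exp_add]
  congr 1
  simp only [powerGronwallExponent, hinv, zero_add, log_one, one_rpow, div_mul_eq_div_div]
  ring

theorem gronwall_power_exp_decay_general_general
    (c B p : ℝ) (hp : 1 < p) (y y' : ℝ → ℝ)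
    (hderiv : ∀ t, 0 ≤ t → HasDerivAt y (y' t) t)
    (hineq : ∀ t, 0 ≤ t → y' t ≤ (c / (t + 1) + B * (t + 1) ^ (-p)) * y t) :
    ∀ t, 0 ≤ t →
      y t ≤ y 0 * Real.exp (B / (p - 1)) * (t + 1) ^ c
              * Real.exp (-B / ((p - 1) * (t + 1) ^ (p - 1))) := by
  intro t ht
  have hφ : ∀ s, 0 ≤ s → HasDerivAt (powerGronwallExponent c B p)
      (c / (s + 1) + B * (s + 1) ^ (-p)) s :=
    fun s hs => hasDerivAt_powerGronwallExponent c B hp.ne' (by linarith)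
  have hbound := le_mul_exp_sub_of_hasDerivAt_le hderiv hφ hineq ht
  rw [exp_powerGronwallExponent_sub_zero c B p (by linarith)] at hbound
  simpa only [mul_assoc] using hbound

/-- **Gronwall-type inequality (core of estimate (65) in Proposition 4.4):**
if `y ≥ 0` is differentiable on `[0,∞)` with
`y′(t) ≤ (c/(t+1) + B (t+1)^{−p}) y(t)`, `c, B ≥ 0`, `p > 1`, then
`y(t) ≤ y(0) exp(B/(p−1)) (t+1)^c exp(−B/((p−1)(t+1)^{p−1}))` for all `t ≥ 0`. -/
theorem gronwall_power_exp_decay_general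
    (c B p : ℝ) (hc : 0 ≤ c) (hB : 0 ≤ B) (hp : 1 < p) (y y' : ℝ → ℝ)
    (hderiv : ∀ t, 0 ≤ t → HasDerivAt y (y' t) t)
    (hineq : ∀ t, 0 ≤ t → y' t ≤ (c / (t + 1) + B * (t + 1) ^ (-p)) * y t)
    (hnonneg : ∀ t, 0 ≤ t → 0 ≤ y t) :
    ∀ t, 0 ≤ t →
      y t ≤ y 0 * Real.exp (B / (p - 1)) * (t + 1) ^ c
              * Real.exp (-B / ((p - 1) * (t + 1) ^ (p - 1))) :=
  gronwall_power_exp_decay_general_general c B p hp y y' hderiv hineq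
end

section
/- Let n ≥ 1 and let v : ℝⁿ → ℝⁿ be a continuously differentiable vector field such that div v is Lebesgue integrable on ℝⁿ and |x|^{n−1} |v(x)| → 0 as |x| → ∞. Then ∫_{ℝⁿ} div v(x) dx = 0. -/
open MeasureTheory Filter

/-!
Integrate `div v` over the cubes `[-R, R]ⁿ`. By the divergence theorem each of these integrals is
the flux of `v` through the boundary of the cube; its `2n` faces have area `(2R)ⁿ⁻¹` and lie in
`{|x| ≥ R}`, so the decay of `|x|ⁿ⁻¹ |v x|` drives the flux to `0`, while integrability of `div v`
drives the integrals to `∫ div v`. Mathlib's divergence theorem lives on `Fin n → ℝ` with the sup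
norm, so `v` is transported there first; the decay survives because the sup norm is dominated by
the Euclidean one.
-/

open Set Metric Bornology Topology WithLp

noncomputable section

def piDivergence {n : ℕ} (w : (Fin n → ℝ) → Fin n → ℝ) (x : Fin n → ℝ) : ℝ :=
  ∑ i, fderiv ℝ w x (Pi.single i 1) i

/-- Outward flux of `w` through the boundary of the cube `closedBall 0 R = [-R, R]ᵐ⁺¹` (a cube
because `Fin (m + 1) → ℝ` carries the sup norm); `i.insertNth (±R)` parametrises the two faces
orthogonal to `eᵢ` by the cube `[-R, R]ᵐ`. -/
def cubeFlux {m : ℕ} (w : (Fin (m + 1) → ℝ) → Fin (m + 1) → ℝ) (R : ℝ) : ℝ :=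
  ∑ i, ((∫ x in closedBall 0 R, w (i.insertNth R x) i) -
    ∫ x in closedBall 0 R, w (i.insertNth (-R) x) i)

end

theorem pi_closedBall_zero_eq_Icc {ι : Type*} [Fintype ι] {R : ℝ} (hR : 0 ≤ R) :
    closedBall (0 : ι → ℝ) R = Icc (fun _ => -R) (fun _ => R) := by
  ext x
  simp [pi_norm_le_iff_of_nonneg hR, abs_le, Pi.le_def, forall_and]

theorem tendsto_setIntegral_closedBall {α E : Type*} [PseudoMetricSpace α] [MeasurableSpace α]
    [OpensMeasurableSpace α] {μ : Measure α} [NormedAddCommGroup E] [NormedSpace ℝ E]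
    {f : α → E} (hf : Integrable f μ) (x : α) :
    Tendsto (fun R => ∫ y in closedBall x R, f y ∂μ) atTop (𝓝 (∫ y, f y ∂μ)) :=
  (aecover_closedBall tendsto_id).integral_tendsto_of_countably_generated hf

section Cube

variable {m : ℕ} {w : (Fin (m + 1) → ℝ) → Fin (m + 1) → ℝ} {R : ℝ}

theorem setIntegral_closedBall_piDivergence (hw : Differentiable ℝ w) (hR : 0 ≤ R)
    (hi : IntegrableOn (piDivergence w) (closedBall 0 R)) :
    ∫ x in closedBall 0 R, piDivergence w x = cubeFlux w R := by
  simp only [cubeFlux, pi_closedBall_zero_eq_Icc hR] at hi ⊢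
  exact integral_divergence_of_hasFDerivAt_off_countable _ _ (fun _ => by linarith) w
    (fderiv ℝ w) ∅ countable_empty hw.continuous.continuousOn
    (fun x _ => (hw x).hasFDerivAt) hi

theorem norm_cubeFlux_le {B : ℝ} (hR : 0 ≤ R) (hB : ∀ y, R ≤ ‖y‖ → ‖w y‖ ≤ B) :
    ‖cubeFlux w R‖ ≤ 2 * (m + 1) * (2 * R) ^ m * B := by
  have hface : ∀ i c, |c| = R →
      ‖∫ x in closedBall (0 : Fin m → ℝ) R, w (i.insertNth c x) i‖ ≤ (2 * R) ^ m * B := by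
    intro i c hc
    have hy : ∀ x, R ≤ ‖(i.insertNth c x : Fin (m + 1) → ℝ)‖ := fun x => by
      simpa [hc] using norm_le_pi_norm (i.insertNth c x : Fin (m + 1) → ℝ) i
    have hbound := norm_setIntegral_le_of_norm_le_const
      (measure_closedBall_lt_top (μ := volume) (x := (0 : Fin m → ℝ)) (r := R))
      fun x _ => (norm_le_pi_norm _ i).trans (hB _ (hy x))
    rwa [measureReal_def, Real.volume_pi_closedBall _ hR, ENNReal.toReal_ofReal (by positivity),
      Fintype.card_fin, mul_comm] at hbound
  calc ‖cubeFlux w R‖ ≤ ∑ _i : Fin (m + 1), ((2 * R) ^ m * B + (2 * R) ^ m * B) :=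
        (norm_sum_le _ _).trans <| Finset.sum_le_sum fun i _ => (norm_sub_le _ _).trans <|
          add_le_add (hface i R (abs_of_nonneg hR))
            (hface i (-R) (by rw [abs_neg, abs_of_nonneg hR]))
    _ = 2 * (m + 1) * (2 * R) ^ m * B := by simp; ring

theorem tendsto_cubeFlux_zero
    (hdecay : Tendsto (fun y => ‖y‖ ^ m * ‖w y‖) (cobounded _) (𝓝 0)) :
    Tendsto (cubeFlux w) atTop (𝓝 0) := by
  rw [Metric.tendsto_nhds]
  intro ε hε
  set δ : ℝ := ε / (4 * (m + 1) * 2 ^ m)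
  obtain ⟨R₀, -, hR₀⟩ := hasBasis_cobounded_norm.eventually_iff.1
    (hdecay.eventually_le_const (show 0 < δ by positivity))
  filter_upwards [eventually_gt_atTop 0, eventually_ge_atTop R₀] with R hR hR₀R
  have hB : ∀ y, R ≤ ‖y‖ → ‖w y‖ ≤ δ / R ^ m := fun y hy => by
    rw [le_div_iff₀ (by positivity)]
    calc ‖w y‖ * R ^ m ≤ ‖y‖ ^ m * ‖w y‖ := by rw [mul_comm]; gcongr
      _ ≤ δ := hR₀ (hR₀R.trans hy)
  rw [dist_zero_right]
  calc ‖cubeFlux w R‖ ≤ 2 * (m + 1) * (2 * R) ^ m * (δ / R ^ m) := norm_cubeFlux_le hR.le hB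
    _ = ε / 2 := by simp only [δ]; field_simp; ring
    _ < ε := half_lt_self hε

theorem integral_piDivergence_eq_zero (hw : Differentiable ℝ w)
    (hi : Integrable (piDivergence w))
    (hdecay : Tendsto (fun y => ‖y‖ ^ m * ‖w y‖) (cobounded _) (𝓝 0)) :
    ∫ x, piDivergence w x = 0 := by
  refine tendsto_nhds_unique (tendsto_setIntegral_closedBall hi 0) ?_
  refine (tendsto_cubeFlux_zero hdecay).congr' ?_
  filter_upwards [eventually_ge_atTop 0] with R hR
  exact (setIntegral_closedBall_piDivergence hw hR hi.integrableOn).symm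

end Cube

theorem piDivergence_ofLp_comp_toLp {n : ℕ}
    (v : EuclideanSpace ℝ (Fin n) → EuclideanSpace ℝ (Fin n)) (y : Fin n → ℝ) :
    piDivergence (ofLp ∘ v ∘ toLp 2) y =
      ∑ i, fderiv ℝ v (toLp 2 y) (EuclideanSpace.single i 1) i := by
  let e := PiLp.continuousLinearEquiv 2 ℝ (fun _ : Fin n => ℝ)
  change ∑ i, fderiv ℝ (e ∘ v ∘ e.symm) y (Pi.single i 1) i = _
  simp only [e.comp_fderiv, e.symm.comp_right_fderiv]
  rfl

theorem EuclideanSpace.norm_ofLp_le {ι : Type*} [Fintype ι] (x : EuclideanSpace ℝ ι) :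
    ‖ofLp x‖ ≤ ‖x‖ :=
  (pi_norm_le_iff_of_nonneg (norm_nonneg _)).2 fun i => PiLp.norm_apply_le x i

theorem tendsto_norm_pow_mul_norm_ofLp_comp_toLp {ι : Type*} [Fintype ι] {k : ℕ}
    {v : EuclideanSpace ℝ ι → EuclideanSpace ℝ ι}
    (hdecay : Tendsto (fun x => ‖x‖ ^ k * ‖v x‖) (cobounded _) (𝓝 0)) :
    Tendsto (fun y => ‖y‖ ^ k * ‖(ofLp ∘ v ∘ toLp 2) y‖) (cobounded (ι → ℝ)) (𝓝 0) := by
  refine squeeze_zero (fun _ => by positivity) (fun y => ?_)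
    (hdecay.comp (PiLp.antilipschitzWith_toLp 2 _).tendsto_cobounded)
  simp only [Function.comp_apply]
  gcongr
  · simpa using EuclideanSpace.norm_ofLp_le (toLp 2 y)
  · exact EuclideanSpace.norm_ofLp_le _

theorem integral_divergence_eq_zero_general
    (n : ℕ)
    (v : EuclideanSpace ℝ (Fin n) → EuclideanSpace ℝ (Fin n))
    (hv : ContDiff ℝ 1 v)
    (hint : Integrable (fun x => ∑ i : Fin n, fderiv ℝ v x (EuclideanSpace.single i 1) i))
    (hdecay : Tendsto (fun x : EuclideanSpace ℝ (Fin n) => ‖x‖ ^ (n - 1) * ‖v x‖)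
      (Bornology.cobounded _) (nhds 0)) :
    ∫ x, ∑ i : Fin n, fderiv ℝ v x (EuclideanSpace.single i 1) i = 0 := by
  cases n with
  | zero => simp
  | succ m =>
    have hdiv : (fun x => ∑ i : Fin (m + 1), fderiv ℝ v x (EuclideanSpace.single i 1) i) =
        piDivergence (ofLp ∘ v ∘ toLp 2) ∘ ofLp := by
      ext x
      simp [piDivergence_ofLp_comp_toLp]
    have hw : Differentiable ℝ (ofLp ∘ v ∘ toLp 2) :=
      (PiLp.contDiff_ofLp.comp (hv.comp PiLp.contDiff_toLp)).differentiable one_ne_zero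
    rw [hdiv, (PiLp.volume_preserving_ofLp _).integrable_comp_emb
      (MeasurableEquiv.toLp 2 _).symm.measurableEmbedding] at hint
    rw [hdiv]
    exact ((EuclideanSpace.volume_preserving_symm_measurableEquiv_toLp _).integral_comp' _).trans
      (integral_piDivergence_eq_zero hw hint
        (tendsto_norm_pow_mul_norm_ofLp_comp_toLp (by simpa using hdecay)))

/-- **Vanishing of the flux:** if `v` is a `C¹` vector field on `ℝⁿ` whose divergence
is integrable and which satisfies `|x|^{n−1}|v(x)| → 0` as `|x| → ∞`, then the
integral of its divergence vanishes: `∫ div v dx = 0`. -/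
theorem integral_divergence_eq_zero
    (n : ℕ) (hn : 1 ≤ n)
    (v : EuclideanSpace ℝ (Fin n) → EuclideanSpace ℝ (Fin n))
    (hv : ContDiff ℝ 1 v)
    (hint : Integrable (fun x => ∑ i : Fin n, fderiv ℝ v x (EuclideanSpace.single i 1) i))
    (hdecay : Tendsto (fun x : EuclideanSpace ℝ (Fin n) => ‖x‖ ^ (n - 1) * ‖v x‖)
      (Bornology.cobounded _) (nhds 0)) :
    ∫ x, ∑ i : Fin n, fderiv ℝ v x (EuclideanSpace.single i 1) i = 0 :=
  integral_divergence_eq_zero_general n v hv hint hdecay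
end
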